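/- Let φ be an endomorphism of a subshift X and n ≥ 0. If an interval J ⊆ ℤ φ^n-codes {0}, then J contains the interval I(-n, φ) = [-W^+(n, φ), -W^-(n, φ)]. -/

import Mathlib

open Filter Topology

/-- The left shift on bi-infinite sequences. -/
def shift {A : Type*} (x : ℤ → A) : ℤ → A := fun n => x (n + 1)

/-- The shift by `k` places (`σ^k`). -/
def zshift {A : Type*} (k : ℤ) (x : ℤ → A) : ℤ → A := fun n => x (n + k)

/-- A subshift: a closed, shift-invariant subset of `Σ^ℤ`. -/
def IsSubshift {A : Type*} [TopologicalSpace A] (X : Set (ℤ → A)) : Prop :=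
  IsClosed X ∧ shift '' X = X

/-- An endomorphism of the subshift `X`: a continuous shift-commuting surjection of `X`. -/
structure IsEndo {A : Type*} [TopologicalSpace A] (X : Set (ℤ → A))
    (φ : (ℤ → A) → (ℤ → A)) : Prop where
  maps : Set.MapsTo φ X X
  surj : Set.SurjOn φ X X
  cont : ContinuousOn φ X
  comm : ∀ x ∈ X, φ (shift x) = shift (φ x)

/-- `S` φ-codes `T`: agreement of two points of `X` on `S` forces agreement of their
φ-images on `T`. -/
def Codes {A : Type*} (X : Set (ℤ → A)) (φ : (ℤ → A) → (ℤ → A)) (S T : Set ℤ) : Prop :=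
  ∀ x ∈ X, ∀ y ∈ X, (∀ i ∈ S, x i = y i) → ∀ j ∈ T, φ x j = φ y j

/-- The set of integers `W` such that `[0,∞)` φⁿ-codes `[W,∞)`; `W⁺(n,φ)` is its
least element. -/
def WplusSet {A : Type*} (X : Set (ℤ → A)) (φ : (ℤ → A) → (ℤ → A)) (n : ℕ) : Set ℤ :=
  {W | Codes X (φ^[n]) (Set.Ici 0) (Set.Ici W)}

/-- The set of integers `W` such that `(-∞,0]` φⁿ-codes `(-∞,W]`; `W⁻(n,φ)` is its
greatest element. -/
def WminusSet {A : Type*} (X : Set (ℤ → A)) (φ : (ℤ → A) → (ℤ → A)) (n : ℕ) : Set ℤ :=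
  {W | Codes X (φ^[n]) (Set.Iic 0) (Set.Iic W)}

/-- A subshift of finite type: defined by a finite set of excluded words. -/
def IsSFT {A : Type*} (X : Set (ℤ → A)) : Prop :=
  ∃ F : Set (List A), F.Finite ∧
    ∀ x : ℤ → A, x ∈ X ↔ ∀ (n : ℤ), ∀ w ∈ F, ∃ i : Fin w.length, x (n + i) ≠ w.get i

/-! Since `φⁿ` commutes with the shift, translating a code of `{0}` by `j` gives a code of `{j}`.
So if `[a, b]` codes `{0}`, then `[0, ∞)` codes `[-a, ∞)` and `(-∞, 0]` codes `(-∞, -b]`,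
whence `W⁺(n, φ) ≤ -a` and `-b ≤ W⁻(n, φ)`. -/

lemma shift_injective {A : Type*} : Function.Injective (shift (A := A)) := fun x y h =>
  funext fun m => by simpa [shift] using congrFun h (m - 1)

lemma zshift_zero {A : Type*} (x : ℤ → A) : zshift 0 x = x := by
  funext m; simp [zshift]

lemma zshift_add_one {A : Type*} (k : ℤ) (x : ℤ → A) :
    zshift (k + 1) x = shift (zshift k x) := by
  funext m; simp only [zshift, shift]; congr 1; ring

lemma zshift_sub_one {A : Type*} (k : ℤ) (x : ℤ → A) :
    shift (zshift (k - 1) x) = zshift k x := by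
  rw [← zshift_add_one, sub_add_cancel]

section Subshift

variable {A : Type*} [TopologicalSpace A] {X : Set (ℤ → A)}

lemma IsSubshift.zshift_mem (hX : IsSubshift X) (k : ℤ) {x : ℤ → A} (hx : x ∈ X) :
    zshift k x ∈ X := by
  induction k using Int.induction_on with
  | zero => rwa [zshift_zero]
  | succ k ih => rw [zshift_add_one, ← hX.2]; exact Set.mem_image_of_mem _ ih
  | pred k ih =>
    rw [← hX.2] at ih
    obtain ⟨y, hy, hxy⟩ := ih
    rwa [← shift_injective (hxy.trans (zshift_sub_one _ x).symm)]

lemma IsSubshift.comm_zshift (hX : IsSubshift X) {ψ : (ℤ → A) → (ℤ → A)}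
    (hψ : ∀ x ∈ X, ψ (shift x) = shift (ψ x)) (k : ℤ) {x : ℤ → A} (hx : x ∈ X) :
    ψ (zshift k x) = zshift k (ψ x) := by
  induction k using Int.induction_on with
  | zero => rw [zshift_zero, zshift_zero]
  | succ k ih => rw [zshift_add_one, zshift_add_one, hψ _ (hX.zshift_mem k hx), ih]
  | pred k ih =>
    apply shift_injective
    rw [← hψ _ (hX.zshift_mem _ hx), zshift_sub_one, zshift_sub_one, ih]

lemma IsEndo.iterate_comm_shift {φ : (ℤ → A) → (ℤ → A)} (hφ : IsEndo X φ) (n : ℕ) :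
    ∀ x ∈ X, φ^[n] (shift x) = shift (φ^[n] x) := by
  intro x hx
  induction n with
  | zero => rfl
  | succ n ih =>
    rw [Function.iterate_succ_apply', Function.iterate_succ_apply', ih,
      hφ.comm _ (hφ.maps.iterate n hx)]

lemma Codes.of_translates (hX : IsSubshift X) {ψ : (ℤ → A) → (ℤ → A)}
    (hψ : ∀ x ∈ X, ψ (shift x) = shift (ψ x)) {S S' T : Set ℤ} (h : Codes X ψ S {0})
    (hST : ∀ j ∈ T, ∀ i ∈ S, i + j ∈ S') : Codes X ψ S' T := by
  intro x hx y hy hxy j hj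
  have h0 := h _ (hX.zshift_mem j hx) _ (hX.zshift_mem j hy)
    (fun i hi => hxy _ (hST j hj i hi)) 0 rfl
  rw [hX.comm_zshift hψ j hx, hX.comm_zshift hψ j hy] at h0
  simpa [zshift] using h0

end Subshift

theorem interval_code_contains_general {A : Type*} [TopologicalSpace A]
    (X : Set (ℤ → A)) (hX : IsSubshift X)
    (φ : (ℤ → A) → (ℤ → A)) (hφ : IsEndo X φ) (n : ℕ)
    (Wp Wm : ℤ)
    (hWp : IsLeast (WplusSet X φ n) Wp)
    (hWm : IsGreatest (WminusSet X φ n) Wm)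
    (a b : ℤ) (hcode : Codes X (φ^[n]) (Set.Icc a b) {0}) :
    Set.Icc (-Wp) (-Wm) ⊆ Set.Icc a b := by
  have hcomm := hφ.iterate_comm_shift n
  have hp : Wp ≤ -a := hWp.2 <| hcode.of_translates hX hcomm fun j hj i hi => by
    simp only [Set.mem_Ici, Set.mem_Icc] at hj hi ⊢; omega
  have hm : -b ≤ Wm := hWm.2 <| hcode.of_translates hX hcomm fun j hj i hi => by
    simp only [Set.mem_Iic, Set.mem_Icc] at hj hi ⊢; omega
  intro z hz
  simp only [Set.mem_Icc] at hz ⊢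
  omega

/-- Any interval which φⁿ-codes `{0}` contains `I(-n, φ) = [-W⁺(n,φ), -W⁻(n,φ)]`. -/
theorem interval_code_contains {A : Type*} [Fintype A] [TopologicalSpace A]
    [DiscreteTopology A] (X : Set (ℤ → A)) (hX : IsSubshift X) (hinf : X.Infinite)
    (φ : (ℤ → A) → (ℤ → A)) (hφ : IsEndo X φ) (n : ℕ)
    (Wp Wm : ℤ)
    (hWp : IsLeast (WplusSet X φ n) Wp)
    (hWm : IsGreatest (WminusSet X φ n) Wm)
    (a b : ℤ) (hcode : Codes X (φ^[n]) (Set.Icc a b) {0}) :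
    Set.Icc (-Wp) (-Wm) ⊆ Set.Icc a b :=
  interval_code_contains_general X hX φ hφ n Wp Wm hWp hWm a b hcode
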